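/- With the notation of the half-ball reflection (B₂⁺, B₂⁻, D, x ↦ x*, α, α*): if f ∈ C^{α(·)}(closure of B₂⁺), define f*(x) = f(x) for x ∈ B₂⁺ ∪ (B₂ ∩ T) and f*(x) = f(x*) for x ∈ B₂⁻. Then f* ∈ C^{α*(·)}(D) and the weighted seminorm satisfies sup_{x≠y ∈ D} R^{α*(x)} |f*(x)−f*(y)|/|x−y|^{α*(x)} ≤ sup_{x≠y ∈ B₂⁺} R^{α(x)} |f(x)−f(y)|/|x−y|^{α(x)}; consequently |f*|'_{0,α*(·),D} ≤ |f|'_{0,α(·),B₂⁺}. -/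

import Mathlib

open Real Set Metric

noncomputable section

/-- The half-space reflection `x ↦ x* = (x', -xₙ)` in `ℝ^{n+1}`. -/
def reflPt {n : ℕ} (x : EuclideanSpace ℝ (Fin (n + 1))) : EuclideanSpace ℝ (Fin (n + 1)) :=
  (WithLp.equiv 2 (Fin (n + 1) → ℝ)).symm fun j => if j = Fin.last n then -(x j) else x j

/-- `B₂ = B(x₀, 2R)`. -/
def ballB {n : ℕ} (x₀ : EuclideanSpace ℝ (Fin (n + 1))) (R : ℝ) :
    Set (EuclideanSpace ℝ (Fin (n + 1))) := Metric.ball x₀ (2 * R)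

/-- `B₂⁺ = B₂ ∩ ℝⁿ₊`. -/
def upperPart {n : ℕ} (x₀ : EuclideanSpace ℝ (Fin (n + 1))) (R : ℝ) :
    Set (EuclideanSpace ℝ (Fin (n + 1))) := ballB x₀ R ∩ {x | 0 < x (Fin.last n)}

/-- `B₂ ∩ T` where `T = {xₙ = 0}`. -/
def flatPart {n : ℕ} (x₀ : EuclideanSpace ℝ (Fin (n + 1))) (R : ℝ) :
    Set (EuclideanSpace ℝ (Fin (n + 1))) := ballB x₀ R ∩ {x | x (Fin.last n) = 0}

/-- `D = B₂⁺ ∪ B₂⁻ ∪ (B₂ ∩ T)`. -/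
def reflDom {n : ℕ} (x₀ : EuclideanSpace ℝ (Fin (n + 1))) (R : ℝ) :
    Set (EuclideanSpace ℝ (Fin (n + 1))) :=
  upperPart x₀ R ∪ reflPt '' upperPart x₀ R ∪ flatPart x₀ R

/-- The reflected exponent `α*`. -/
def alphaStar {n : ℕ} (α : EuclideanSpace ℝ (Fin (n + 1)) → ℝ)
    (x : EuclideanSpace ℝ (Fin (n + 1))) : ℝ :=
  if 0 ≤ x (Fin.last n) then α x else α (reflPt x)

/-- The reflected function `f*`. -/
def fStar {n : ℕ} (f : EuclideanSpace ℝ (Fin (n + 1)) → ℝ)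
    (x : EuclideanSpace ℝ (Fin (n + 1))) : ℝ :=
  if 0 ≤ x (Fin.last n) then f x else f (reflPt x)

/-! With the folding map `x⁺ = (x', |xₙ|)` one has `f* = f ∘ (·)⁺` and `α* = α ∘ (·)⁺`; folding
is `1`-Lipschitz (this is the inequality `|x - y*| ≤ |x - y|`) and maps `D` into
`B₂⁺ ∪ (B₂ ∩ T) ⊆ closure B₂⁺`. So the Hölder quotient of `f*` at `(x, y)` is at most that of `f`
at `(x⁺, y⁺)`, and it remains to pass the bounds from `B₂⁺` to the flat part `B₂ ∩ T`. This is done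
by continuity of `f` and of `α`; the latter follows from the log-Hölder condition, since
`|α z - α x| ≤ M / |log |z - x||`. -/

open Filter Topology

def holderQuot {E : Type*} [Norm E] [Sub E] (R : ℝ) (α f : E → ℝ) (x y : E) : ℝ :=
  R ^ α x * (|f x - f y| / ‖x - y‖ ^ α x)

section HolderQuot

variable {E : Type*} [NormedAddCommGroup E] {s : Set E} {R K : ℝ} {α f : E → ℝ}

lemma holderQuot_nonneg (hR : 0 ≤ R) (x y : E) : 0 ≤ holderQuot R α f x y := by
  unfold holderQuot; positivity

lemma le_holderQuot_of_norm_le {x y x' y' : E} (hR : 0 ≤ R) (hα : 0 ≤ α x') (hx'y' : x' ≠ y')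
    (hnorm : ‖x' - y'‖ ≤ ‖x - y‖) :
    R ^ α x' * (|f x' - f y'| / ‖x - y‖ ^ α x') ≤ holderQuot R α f x' y' := by
  have hpos : 0 < ‖x' - y'‖ := norm_sub_pos_iff.mpr hx'y'
  unfold holderQuot; gcongr

lemma nonneg_of_forall_holderQuot_le [NormedSpace ℝ E] [Nontrivial E] (hs : IsOpen s)
    (hne : s.Nonempty) (hR : 0 ≤ R) (hK : ∀ x ∈ s, ∀ y ∈ s, x ≠ y → holderQuot R α f x y ≤ K) :
    0 ≤ K := by
  obtain ⟨x, hx⟩ := hne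
  have hnear : ∀ᶠ y in 𝓝[≠] x, y ∈ s ∧ y ≠ x :=
    (eventually_nhdsWithin_of_eventually_nhds (hs.mem_nhds hx)).and self_mem_nhdsWithin
  obtain ⟨y, hy, hyx⟩ := hnear.exists
  exact (holderQuot_nonneg hR x y).trans (hK x hx y hy (Ne.symm hyx))

lemma holderQuot_le_of_mem_closure (hR : R ≠ 0)
    (hK : ∀ x ∈ s, ∀ y ∈ s, x ≠ y → holderQuot R α f x y ≤ K) {x y : E}
    (hx : x ∈ closure s) (hy : y ∈ closure s) (hxy : x ≠ y) (hαx : ContinuousWithinAt α s x)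
    (hfx : ContinuousWithinAt f s x) (hfy : ContinuousWithinAt f s y) :
    holderQuot R α f x y ≤ K := by
  set t : Set (E × E) := {p | p.1 ≠ p.2} ∩ s ×ˢ s
  have hmem : (x, y) ∈ closure t :=
    (isOpen_ne_fun continuous_fst continuous_snd).inter_closure
      ⟨hxy, by rw [closure_prod_eq]; exact ⟨hx, hy⟩⟩
  have hfst : MapsTo Prod.fst t s := fun p hp => hp.2.1
  have hsnd : MapsTo Prod.snd t s := fun p hp => hp.2.2
  have hα₁ : ContinuousWithinAt (fun p : E × E => α p.1) t (x, y) :=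
    hαx.comp continuousWithinAt_fst hfst
  have hnorm : ContinuousWithinAt (fun p : E × E => ‖p.1 - p.2‖ ^ α p.1) t (x, y) :=
    (continuousWithinAt_fst.sub continuousWithinAt_snd).norm.rpow hα₁
      (Or.inl (norm_sub_pos_iff.mpr hxy).ne')
  have hquot : ContinuousWithinAt (fun p : E × E => holderQuot R α f p.1 p.2) t (x, y) :=
    (continuousWithinAt_const.rpow hα₁ (Or.inl hR)).mul
      (((hfx.comp continuousWithinAt_fst hfst).sub (hfy.comp continuousWithinAt_snd hsnd)).abs.div
        hnorm (Real.rpow_pos_of_pos (norm_sub_pos_iff.mpr hxy) _).ne')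
  exact hquot.closure_le hmem continuousWithinAt_const fun p hp => hK _ hp.2.1 _ hp.2.2 hp.1

end HolderQuot

lemma continuousWithinAt_of_abs_sub_mul_abs_log_le {E : Type*} [NormedAddCommGroup E]
    {s : Set E} {α : E → ℝ} {x : E} {M : ℝ}
    (h : ∀ z ∈ s, z ≠ x → |α z - α x| * |log ‖z - x‖| ≤ M) : ContinuousWithinAt α s x := by
  rw [← continuousWithinAt_sdiff_self, ContinuousWithinAt, tendsto_iff_dist_tendsto_zero]
  have hlog : Tendsto (fun z => |log ‖z - x‖|) (𝓝[s \ {x}] x) atTop :=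
    tendsto_abs_atBot_atTop.comp <| tendsto_log_nhdsGT_zero.comp <|
      (tendsto_norm_sub_self_nhdsNE x).mono_left (nhdsWithin_mono _ (sdiff_subset_compl _ _))
  refine squeeze_zero' (Eventually.of_forall fun _ => dist_nonneg) ?_
    ((tendsto_const_nhds (x := M)).div_atTop hlog)
  filter_upwards [hlog.eventually_gt_atTop 0, self_mem_nhdsWithin] with z hpos hz
  rw [Real.dist_eq, le_div_iff₀ hpos]
  exact h z hz.1 hz.2

section Fold

variable {n : ℕ}

def foldPt (x : EuclideanSpace ℝ (Fin (n + 1))) : EuclideanSpace ℝ (Fin (n + 1)) :=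
  (WithLp.equiv 2 (Fin (n + 1) → ℝ)).symm fun j => if j = Fin.last n then |x j| else x j

lemma foldPt_apply (x : EuclideanSpace ℝ (Fin (n + 1))) (j : Fin (n + 1)) :
    foldPt x j = if j = Fin.last n then |x j| else x j := rfl

lemma continuous_foldPt : Continuous (foldPt (n := n)) := by
  refine (PiLp.continuous_toLp 2 _).comp (continuous_pi fun j => ?_)
  split_ifs
  · exact (PiLp.continuous_apply 2 _ j).abs
  · exact PiLp.continuous_apply 2 _ j

lemma foldPt_eq_ite (x : EuclideanSpace ℝ (Fin (n + 1))) :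
    foldPt x = if 0 ≤ x (Fin.last n) then x else reflPt x := by
  ext j
  by_cases hj : j = Fin.last n
  · subst hj
    split_ifs with h
    · simp [foldPt_apply, abs_of_nonneg h]
    · simp [foldPt_apply, reflPt, abs_of_neg (not_le.mp h)]
  · split_ifs <;> simp [foldPt_apply, reflPt, hj]

lemma foldPt_of_nonneg {x : EuclideanSpace ℝ (Fin (n + 1))} (h : 0 ≤ x (Fin.last n)) :
    foldPt x = x := by
  rw [foldPt_eq_ite, if_pos h]

lemma foldPt_reflPt (x : EuclideanSpace ℝ (Fin (n + 1))) : foldPt (reflPt x) = foldPt x := by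
  ext j
  by_cases hj : j = Fin.last n <;> simp [foldPt_apply, reflPt, hj]

lemma norm_foldPt_sub_foldPt_le (x y : EuclideanSpace ℝ (Fin (n + 1))) :
    ‖foldPt x - foldPt y‖ ≤ ‖x - y‖ := by
  rw [EuclideanSpace.norm_eq, EuclideanSpace.norm_eq]
  gcongr with j
  by_cases hj : j = Fin.last n
  · simpa [foldPt_apply, hj] using abs_abs_sub_abs_le_abs_sub (x j) (y j)
  · simp [foldPt_apply, hj]

lemma fStar_eq_comp (f : EuclideanSpace ℝ (Fin (n + 1)) → ℝ) : fStar f = f ∘ foldPt := by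
  ext x; rw [fStar, Function.comp_apply, foldPt_eq_ite, apply_ite f]

lemma alphaStar_eq_comp (α : EuclideanSpace ℝ (Fin (n + 1)) → ℝ) :
    alphaStar α = α ∘ foldPt := by
  ext x; rw [alphaStar, Function.comp_apply, foldPt_eq_ite, apply_ite α]

variable (x₀ : EuclideanSpace ℝ (Fin (n + 1))) (R : ℝ)

lemma isOpen_upperPart : IsOpen (upperPart x₀ R) :=
  isOpen_ball.inter (isOpen_lt continuous_const (PiLp.continuous_apply 2 _ _))

lemma flatPart_subset_closure_upperPart : flatPart x₀ R ⊆ closure (upperPart x₀ R) := by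
  rintro x ⟨hxB, hx⟩
  refine isOpen_ball.inter_closure ⟨hxB, ?_⟩
  rw [closure_open_halfSpace]
  exact hx.ge

lemma mapsTo_foldPt_reflDom :
    MapsTo foldPt (reflDom x₀ R) (upperPart x₀ R ∪ flatPart x₀ R) := by
  rintro x ((hx | ⟨u, hu, rfl⟩) | hx)
  · rw [foldPt_of_nonneg hx.2.le]; exact Or.inl hx
  · rw [foldPt_reflPt, foldPt_of_nonneg hu.2.le]; exact Or.inl hu
  · rw [foldPt_of_nonneg hx.2.ge]; exact Or.inr hx

end Fold

theorem stmt_3_general {n : ℕ} (x₀ : EuclideanSpace ℝ (Fin (n + 1))) (R : ℝ) (hR : 0 < R)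
    (α : EuclideanSpace ℝ (Fin (n + 1)) → ℝ) (M : ℝ)
    (hα01 : ∀ x ∈ upperPart x₀ R ∪ flatPart x₀ R, α x ∈ Set.Ioc (0 : ℝ) 1)
    (hlog : ∀ x ∈ upperPart x₀ R ∪ flatPart x₀ R, ∀ y ∈ upperPart x₀ R ∪ flatPart x₀ R,
      x ≠ y → |α x - α y| * |Real.log ‖x - y‖| ≤ M)
    (f : EuclideanSpace ℝ (Fin (n + 1)) → ℝ)
    (hf : ContinuousOn f (closure (upperPart x₀ R))) :
    ContinuousOn (fStar f) (reflDom x₀ R) ∧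
    (∀ K : ℝ, (∀ x ∈ upperPart x₀ R, |f x| ≤ K) →
      ∀ x ∈ reflDom x₀ R, |fStar f x| ≤ K) ∧
    (∀ K : ℝ,
      (∀ x ∈ upperPart x₀ R, ∀ y ∈ upperPart x₀ R, x ≠ y →
        R ^ α x * (|f x - f y| / ‖x - y‖ ^ α x) ≤ K) →
      ∀ x ∈ reflDom x₀ R, ∀ y ∈ reflDom x₀ R, x ≠ y →
        R ^ alphaStar α x * (|fStar f x - fStar f y| / ‖x - y‖ ^ alphaStar α x) ≤ K) := by
  set U := upperPart x₀ R
  have hVU : U ∪ flatPart x₀ R ⊆ closure U :=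
    union_subset subset_closure (flatPart_subset_closure_upperPart x₀ R)
  have hfold := mapsTo_foldPt_reflDom x₀ R
  have hfV : ∀ x ∈ U ∪ flatPart x₀ R, ContinuousWithinAt f U x :=
    fun x hx => (hf x (hVU hx)).mono subset_closure
  refine ⟨?_, fun K hK x hx => ?_, fun K hK x hx y hy _ => ?_⟩
  · rw [fStar_eq_comp]
    exact hf.comp continuous_foldPt.continuousOn (hfold.mono_right hVU)
  · rw [fStar_eq_comp]
    exact (hfV _ (hfold hx)).abs.closure_le (hVU (hfold hx)) continuousWithinAt_const hK
  · have hK0 : 0 ≤ K := nonneg_of_forall_holderQuot_le (isOpen_upperPart x₀ R)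
      (closure_nonempty_iff.mp ⟨_, hVU (hfold hx)⟩) hR.le hK
    rw [alphaStar_eq_comp, fStar_eq_comp]
    by_cases hxy : foldPt x = foldPt y
    · simpa [hxy] using hK0
    refine (le_holderQuot_of_norm_le hR.le (hα01 _ (hfold hx)).1.le hxy
      (norm_foldPt_sub_foldPt_le x y)).trans ?_
    exact holderQuot_le_of_mem_closure hR.ne' hK (hVU (hfold hx)) (hVU (hfold hy)) hxy
      (continuousWithinAt_of_abs_sub_mul_abs_log_le fun z hz hzx =>
        hlog z (Or.inl hz) _ (hfold hx) hzx)
      (hfV _ (hfold hx)) (hfV _ (hfold hy))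

theorem stmt_3 {n : ℕ} (x₀ : EuclideanSpace ℝ (Fin (n + 1))) (R : ℝ) (hR : 0 < R)
    (hx₀ : 0 ≤ x₀ (Fin.last n))
    (α : EuclideanSpace ℝ (Fin (n + 1)) → ℝ) (αm αp M : ℝ)
    (hαm : 0 < αm) (hαp : αp < 1)
    (hα : ∀ x ∈ upperPart x₀ R ∪ flatPart x₀ R, αm ≤ α x ∧ α x ≤ αp)
    (hα01 : ∀ x ∈ upperPart x₀ R ∪ flatPart x₀ R, α x ∈ Set.Ioc (0 : ℝ) 1)
    (hlog : ∀ x ∈ upperPart x₀ R ∪ flatPart x₀ R, ∀ y ∈ upperPart x₀ R ∪ flatPart x₀ R,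
      x ≠ y → |α x - α y| * |Real.log ‖x - y‖| ≤ M)
    (f : EuclideanSpace ℝ (Fin (n + 1)) → ℝ)
    (hf : ContinuousOn f (closure (upperPart x₀ R))) :
    ContinuousOn (fStar f) (reflDom x₀ R) ∧
    (∀ K : ℝ, (∀ x ∈ upperPart x₀ R, |f x| ≤ K) →
      ∀ x ∈ reflDom x₀ R, |fStar f x| ≤ K) ∧
    (∀ K : ℝ,
      (∀ x ∈ upperPart x₀ R, ∀ y ∈ upperPart x₀ R, x ≠ y →
        R ^ α x * (|f x - f y| / ‖x - y‖ ^ α x) ≤ K) →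
      ∀ x ∈ reflDom x₀ R, ∀ y ∈ reflDom x₀ R, x ≠ y →
        R ^ alphaStar α x * (|fStar f x - fStar f y| / ‖x - y‖ ^ alphaStar α x) ≤ K) :=
  stmt_3_general x₀ R hR α M hα01 hlog f hf
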